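/- arXiv:math/0002198 — 3 statements merged into one kernel-verified Lean document; each statement's English description precedes it below -/
import Mathlib

section
/- Let K be a compact operator on a Hilbert space. If (I+K)*(I+K) = I (equivalently, K + K* + K*K = 0), then I+K is unitary, i.e. also (I+K)(I+K)* = I; in particular −1 is not an eigenvalue of K and I+K is invertible. -/
/-!
The isometry `1 + K` is injective, so `-1` is not an eigenvalue of the compact operator `K`.
By the Fredholm alternative `1 + K` is then invertible, and its left inverse `(1 + K)*` is
also a right inverse.
-/

open ContinuousLinearMap

theorem IsUnit.mul_eq_one_of_mul_eq_one_left {M : Type*} [Monoid M] {a b : M} (ha : IsUnit a)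
    (h : b * a = 1) : a * b = 1 := by
  obtain ⟨u, rfl⟩ := ha
  rw [Units.eq_inv_of_mul_eq_one_right h, Units.mul_inv]

theorem IsCompactOperator.isUnit_one_add_of_injective {𝕜 X : Type*}
    [NontriviallyNormedField 𝕜] [NormedAddCommGroup X] [NormedSpace 𝕜 X] [CompleteSpace X]
    {K : X →L[𝕜] X}
    (hK : IsCompactOperator K) (hinj : Function.Injective ⇑(1 + K)) : IsUnit (1 + K) := by
  rcases hK.hasEigenvalue_or_mem_resolventSet (neg_ne_zero.2 one_ne_zero : (-1 : 𝕜) ≠ 0)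
    with heig | hres
  · obtain ⟨x, hx⟩ := heig.exists_hasEigenvector
    have hKx : K x = -x := by simpa using hx.apply_eq_smul
    exact (hx.2 (hinj (by simp [hKx]))).elim
  · rwa [spectrum.mem_resolventSet_iff, map_neg, map_one, ← neg_add', IsUnit.neg_iff] at hres

theorem ContinuousLinearMap.adjoint_one_add_comp_one_add {𝕜 H : Type*} [RCLike 𝕜]
    [NormedAddCommGroup H] [InnerProductSpace 𝕜 H] [CompleteSpace H] (K : H →L[𝕜] H) :
    adjoint (1 + K) ∘L (1 + K) = 1 + (K + adjoint K + adjoint K ∘L K) := by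
  rw [← mul_def, ← mul_def, map_add, adjoint_one, add_mul, mul_add, mul_add, one_mul, mul_one,
    one_mul]
  abel

/-- Let `K` be a compact operator on a (real or complex) Hilbert space.
If `(I+K)*(I+K) = I` (equivalently, `K + K* + K*K = 0`), then `I+K` is unitary, i.e. also
`(I+K)(I+K)* = I`; in particular `−1` is not an eigenvalue of `K` and `I+K` is
invertible.  (The first conjunct of the conclusion records the equivalence of the two
ways of writing the hypothesis.) -/
theorem statement2
    {𝕜 : Type} [RCLike 𝕜] {H : Type} [NormedAddCommGroup H] [InnerProductSpace 𝕜 H]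
    [CompleteSpace H]
    (K : H →L[𝕜] H) (hK : IsCompactOperator K)
    (h : ContinuousLinearMap.adjoint (1 + K) ∘L (1 + K) = 1) :
    (ContinuousLinearMap.adjoint (1 + K) ∘L (1 + K) = 1 ↔
        K + ContinuousLinearMap.adjoint K + ContinuousLinearMap.adjoint K ∘L K = 0) ∧
    (1 + K) ∘L ContinuousLinearMap.adjoint (1 + K) = 1 ∧
    (∀ x : H, K x = -x → x = 0) ∧
    IsUnit (1 + K) := by
  have hinj : Function.Injective ⇑(1 + K) :=
    Function.LeftInverse.injective (g := adjoint (1 + K)) fun x ↦ by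
      rw [← comp_apply, h, one_apply_eq_self]
  have hunit : IsUnit (1 + K) := hK.isUnit_one_add_of_injective hinj
  refine ⟨by rw [adjoint_one_add_comp_one_add, add_eq_left],
    hunit.mul_eq_one_of_mul_eq_one_left h, fun x hx ↦ hinj ?_, hunit⟩
  simp [hx]
end

section
/- Let (Π_θ, θ ∈ [0,2π]) be a resolution of the identity on a separable Hilbert space H such that θ ↦ (Π_θ h, k)_H is continuous on [0,2π] for every h, k ∈ H. Then for every n ≥ 1 and every f, g in the n-fold symmetric tensor power H^{⊙n}, the map (θ₁,…,θₙ) ↦ ((Π_{θ₁} ⊗ … ⊗ Π_{θₙ}) f, g)_{H^{⊙n}} is continuous on [0,2π]ⁿ. -/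
open MeasureTheory Filter Topology
open scoped InnerProductSpace

noncomputable section

/-- A resolution of the identity `(Π_θ, θ ∈ [0,2π])` on a complex Hilbert space `H`
(extended to all of `ℝ` by `Π_θ = 0` for `θ ≤ 0` and `Π_θ = I` for `θ ≥ 2π`): an
increasing, right-continuous family of orthogonal projections with `Π₀ = 0` and
`Π_{2π} = I`.  The last two fields record the (automatic) monotonicity and right
continuity of the distribution functions `θ ↦ (Π_θ x, x)`. -/
structure ResolutionOfIdentity (H : Type) [NormedAddCommGroup H]
    [InnerProductSpace ℂ H] where
  P : ℝ → H →L[ℂ] H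
  idem : ∀ θ : ℝ, P θ ∘L P θ = P θ
  selfadj : ∀ (θ : ℝ) (x y : H), ⟪P θ x, y⟫_ℂ = ⟪x, P θ y⟫_ℂ
  mono_comp : ∀ s t : ℝ, s ≤ t → P s ∘L P t = P s ∧ P t ∘L P s = P s
  norm_le : ∀ (θ : ℝ) (x : H), ‖P θ x‖ ≤ ‖x‖
  rightCont : ∀ (t : ℝ) (x : H), Tendsto (fun θ => P θ x) (𝓝[≥] t) (𝓝 (P t x))
  eq_zero : ∀ θ : ℝ, θ ≤ 0 → P θ = 0
  eq_one : ∀ θ : ℝ, 2 * Real.pi ≤ θ → P θ = 1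
  distrib_mono : ∀ x : H, Monotone fun θ => (⟪P θ x, x⟫_ℂ).re
  distrib_rightCont : ∀ (x : H) (t : ℝ),
    ContinuousWithinAt (fun θ => (⟪P θ x, x⟫_ℂ).re) (Set.Ici t) t

/-- The distribution function `θ ↦ (Π_θ x, x)` as a Stieltjes function. -/
def ResolutionOfIdentity.stieltjesOf {H : Type} [NormedAddCommGroup H]
    [InnerProductSpace ℂ H] (RI : ResolutionOfIdentity H) (x : H) :
    StieltjesFunction ℝ where
  toFun := fun θ => (⟪RI.P θ x, x⟫_ℂ).re
  mono' := RI.distrib_mono x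
  right_continuous' := RI.distrib_rightCont x

/-- The (positive, finite) spectral measure `d(Π_θ x, x)` on `ℝ` associated with a
resolution of the identity. -/
def ResolutionOfIdentity.specMeasure {H : Type} [NormedAddCommGroup H]
    [InnerProductSpace ℂ H] (RI : ResolutionOfIdentity H) (x : H) : Measure ℝ :=
  (RI.stieltjesOf x).measure

/-- `R = ∫₀^{2π} e^{iθ} dΠ_θ`: the unitary `R` has `(Π_θ)` as spectral resolution of the
identity (formulated via the diagonal spectral measures, which suffices by
polarization). -/
def ResolutionOfIdentity.IsSpectralResolutionOf {H : Type} [NormedAddCommGroup H]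
    [InnerProductSpace ℂ H] (RI : ResolutionOfIdentity H) (R : H ≃ₗᵢ[ℂ] H) : Prop :=
  ∀ x : H, ⟪x, R x⟫_ℂ = ∫ θ, Complex.exp (θ * Complex.I) ∂(RI.specMeasure x)

open scoped InnerProductSpace

/-- The `n`-fold Hilbert-space tensor power of `H`, presented axiomatically: a Hilbert
space `E` together with the canonical multilinear map `tprod(f) = f 1 ⊗ … ⊗ f n`, whose
inner products multiply and whose image spans densely; `map A = A 1 ⊗ … ⊗ A n` is the
tensor product of operators and `permute σ` permutes the factors. -/
structure HilbertTensorPower (𝕜 : Type) [RCLike 𝕜] (H : Type) [NormedAddCommGroup H]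
    [InnerProductSpace 𝕜 H] (n : ℕ) (E : Type) [NormedAddCommGroup E]
    [InnerProductSpace 𝕜 E] [CompleteSpace E] : Type where
  tprod : (Fin n → H) → E
  inner_tprod : ∀ f g : Fin n → H,
    ⟪tprod f, tprod g⟫_𝕜 = ∏ i, ⟪f i, g i⟫_𝕜
  dense_span : (Submodule.span 𝕜 (Set.range tprod)).topologicalClosure = ⊤
  map : (Fin n → H →L[𝕜] H) → (E →L[𝕜] E)
  map_tprod : ∀ (A : Fin n → H →L[𝕜] H) (f : Fin n → H),
    map A (tprod f) = tprod fun i => A i (f i)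
  map_norm : ∀ A : Fin n → H →L[𝕜] H, ‖map A‖ ≤ ∏ i, ‖A i‖
  permute : Equiv.Perm (Fin n) → (E ≃ₗᵢ[𝕜] E)
  permute_tprod : ∀ (σ : Equiv.Perm (Fin n)) (f : Fin n → H), permute σ (tprod f) = tprod (f ∘ σ)

/-- The symmetric tensors in the `n`-th tensor power: those fixed by all permutations of
the factors.  This realizes the symmetric tensor power `H^{⊙n}` inside `H^{⊗n}`. -/
def HilbertTensorPower.IsSymmetric {𝕜 : Type} [RCLike 𝕜] {H : Type}
    [NormedAddCommGroup H] [InnerProductSpace 𝕜 H] {n : ℕ} {E : Type}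
    [NormedAddCommGroup E] [InnerProductSpace 𝕜 E] [CompleteSpace E]
    (TP : HilbertTensorPower 𝕜 H n E) (x : E) : Prop :=
  ∀ σ : Equiv.Perm (Fin n), TP.permute σ x = x

/-!
Weak continuity of `θ ↦ Π_θ` upgrades to strong continuity because the `Π_θ` are projections:
`‖Π_θ x - Π_t x‖² = (Π_θ x, x) - 2 Re (Π_θ x, Π_t x) + (Π_t x, x)`.  Hence on elementary tensors
`(Π_{θ₁} ⊗ … ⊗ Π_{θₙ}) (h₁ ⊗ … ⊗ hₙ) = Π_{θ₁} h₁ ⊗ … ⊗ Π_{θₙ} hₙ` depends continuously on `θ`,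
and since these operators have norm at most `1`, strong continuity passes to the closed span of
the elementary tensors, which is the whole tensor power.
-/

section InnerContinuity

variable {𝕜 E X : Type*} [RCLike 𝕜] [NormedAddCommGroup E] [InnerProductSpace 𝕜 E]
  [TopologicalSpace X]

theorem continuousAt_of_continuousAt_inner {F : X → E} {b : X}
    (hself : ContinuousAt (fun x => ⟪F x, F x⟫_𝕜) b)
    (hb : ContinuousAt (fun x => ⟪F x, F b⟫_𝕜) b) : ContinuousAt F b := by
  have hsq : Tendsto (fun x => ‖F x - F b‖ ^ 2) (𝓝 b) (𝓝 0) := by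
    have hre : ContinuousAt (fun x =>
        RCLike.re (⟪F x, F x⟫_𝕜 - ⟪F x, F b⟫_𝕜 - ⟪F b, F x⟫_𝕜 + ⟪F b, F b⟫_𝕜)) b := by
      refine RCLike.continuous_re.continuousAt.comp (((hself.sub hb).sub ?_).add continuousAt_const)
      simpa only [Function.comp_def, inner_conj_symm] using
        (RCLike.continuous_conj (K := 𝕜)).continuousAt.comp hb
    have := hre.tendsto
    simp only [sub_self, zero_sub, neg_add_cancel, map_zero] at this
    convert this using 2 with x
    rw [← inner_sub_sub_self, inner_self_eq_norm_sq]
  have hnorm := (Real.continuous_sqrt.tendsto 0).comp hsq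
  simp only [Function.comp_def, Real.sqrt_sq (norm_nonneg _), Real.sqrt_zero] at hnorm
  exact tendsto_iff_norm_sub_tendsto_zero.mpr hnorm

end InnerContinuity

section StrongContinuity

variable {𝕜 E F X : Type*} [NontriviallyNormedField 𝕜] [NormedAddCommGroup E] [NormedSpace 𝕜 E]
  [NormedAddCommGroup F] [NormedSpace 𝕜 F] [TopologicalSpace X]

def ContinuousLinearMap.strongContinuitySubmodule (T : X → E →L[𝕜] F) : Submodule 𝕜 E where
  carrier := {v | Continuous fun x => T x v}
  zero_mem' := by simpa using continuous_const
  add_mem' hv hw := by simp only [Set.mem_ofPred_eq, map_add]; exact hv.add hw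
  smul_mem' c v hv := by simp only [Set.mem_ofPred_eq, map_smul]; exact hv.const_smul c

theorem ContinuousLinearMap.isClosed_strongContinuitySubmodule {T : X → E →L[𝕜] F}
    (hT : ∃ C, ∀ x, ‖T x‖ ≤ C) : IsClosed (strongContinuitySubmodule T : Set E) := by
  have hequi : Equicontinuous fun x => (T x : E → F) :=
    ((NormedSpace.equicontinuous_TFAE T).out 5 1).mp hT
  have : (strongContinuitySubmodule T : Set E) =
      ⋂ x₀, {v | Tendsto (fun x => T x v) (𝓝 x₀) (𝓝 (T x₀ v))} := by
    ext v
    simp [strongContinuitySubmodule, continuous_iff_continuousAt, ContinuousAt]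
  rw [this]
  exact isClosed_iInter fun x₀ => hequi.isClosed_setOfPred_tendsto (T x₀).continuous

end StrongContinuity

namespace ResolutionOfIdentity

variable {H : Type} [NormedAddCommGroup H] [InnerProductSpace ℂ H] (RI : ResolutionOfIdentity H)

theorem P_apply_P_apply (θ : ℝ) (x : H) : RI.P θ (RI.P θ x) = RI.P θ x :=
  congrArg (fun T : H →L[ℂ] H => T x) (RI.idem θ)

theorem inner_P_apply_P_apply (θ : ℝ) (x : H) : ⟪RI.P θ x, RI.P θ x⟫_ℂ = ⟪RI.P θ x, x⟫_ℂ := by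
  rw [← RI.selfadj, P_apply_P_apply]

theorem norm_P_le_one (θ : ℝ) : ‖RI.P θ‖ ≤ 1 :=
  ContinuousLinearMap.opNorm_le_bound _ zero_le_one fun x => by
    simpa only [one_mul] using RI.norm_le θ x

theorem continuous_P_apply (hcont : ∀ x y : H, Continuous fun θ => ⟪RI.P θ x, y⟫_ℂ) (x : H) :
    Continuous fun θ => RI.P θ x :=
  continuous_iff_continuousAt.mpr fun t =>
    continuousAt_of_continuousAt_inner
      (by simpa only [inner_P_apply_P_apply] using (hcont x x).continuousAt)
      (hcont x (RI.P t x)).continuousAt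

end ResolutionOfIdentity

namespace HilbertTensorPower

variable {𝕜 H E : Type} [RCLike 𝕜] [NormedAddCommGroup H] [InnerProductSpace 𝕜 H] {n : ℕ}
  [NormedAddCommGroup E] [InnerProductSpace 𝕜 E] [CompleteSpace E] (TP : HilbertTensorPower 𝕜 H n E)

theorem continuous_tprod : Continuous TP.tprod :=
  continuous_iff_continuousAt.mpr fun b =>
    continuousAt_of_continuousAt_inner (𝕜 := 𝕜)
      (by
        simp only [inner_tprod]
        exact (continuous_finsetProd _ fun i _ =>
          (continuous_apply i).inner (continuous_apply i)).continuousAt)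
      (by
        simp only [inner_tprod]
        exact (continuous_finsetProd _ fun i _ =>
          (continuous_apply i).inner continuous_const).continuousAt)

theorem norm_map_le_pow {A : Fin n → H →L[𝕜] H} {C : ℝ} (hA : ∀ i, ‖A i‖ ≤ C) :
    ‖TP.map A‖ ≤ C ^ n :=
  calc ‖TP.map A‖ ≤ ∏ i, ‖A i‖ := TP.map_norm A
    _ ≤ ∏ _i : Fin n, C := Finset.prod_le_prod (fun i _ => norm_nonneg _) fun i _ => hA i
    _ = C ^ n := by rw [Finset.prod_const, Finset.card_univ, Fintype.card_fin]

theorem continuous_map_apply {X : Type*} [TopologicalSpace X] {A : X → Fin n → H →L[𝕜] H}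
    (hA : ∀ i h, Continuous fun x => A x i h) (hbdd : ∃ C, ∀ x i, ‖A x i‖ ≤ C) (f : E) :
    Continuous fun x => TP.map (A x) f := by
  set K := ContinuousLinearMap.strongContinuitySubmodule fun x => TP.map (A x)
  have hspan : Submodule.span 𝕜 (Set.range TP.tprod) ≤ K := by
    rw [Submodule.span_le]
    rintro _ ⟨h, rfl⟩
    change Continuous fun x => TP.map (A x) (TP.tprod h)
    simp only [map_tprod]
    exact TP.continuous_tprod.comp (continuous_pi fun i => hA i (h i))
  obtain ⟨C, hC⟩ := hbdd
  have hclosed : IsClosed (K : Set E) :=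
    ContinuousLinearMap.isClosed_strongContinuitySubmodule
      ⟨C ^ n, fun x => TP.norm_map_le_pow (hC x)⟩
  have hf : f ∈ (Submodule.span 𝕜 (Set.range TP.tprod)).topologicalClosure := by
    rw [TP.dense_span]
    exact Submodule.mem_top
  exact Submodule.topologicalClosure_minimal _ hspan hclosed hf

end HilbertTensorPower

theorem statement9_general
    {H : Type} [NormedAddCommGroup H] [InnerProductSpace ℂ H]
    (RI : ResolutionOfIdentity H)
    (hcont : ∀ x y : H, Continuous fun θ => ⟪RI.P θ x, y⟫_ℂ)
    (n : ℕ)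
    {E : Type} [NormedAddCommGroup E] [InnerProductSpace ℂ E] [CompleteSpace E]
    (TP : HilbertTensorPower ℂ H n E)
    (f g : E) :
    Continuous fun θ : Fin n → ℝ => ⟪TP.map (fun i => RI.P (θ i)) f, g⟫_ℂ :=
  (TP.continuous_map_apply
    (fun i h => (RI.continuous_P_apply hcont h).comp (continuous_apply i))
    ⟨1, fun θ i => RI.norm_P_le_one (θ i)⟩ f).inner continuous_const

/-- Let `(Π_θ)` be a resolution of the identity on a separable Hilbert
space `H` such that `θ ↦ (Π_θ h, k)` is continuous for all `h, k ∈ H`.  Then for every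
`n ≥ 1` and all `f, g` in the symmetric tensor power `H^{⊙n}`, the function
`(θ₁,…,θₙ) ↦ ((Π_{θ₁} ⊗ … ⊗ Π_{θₙ})f, g)` is continuous. -/
theorem statement9
    {H : Type} [NormedAddCommGroup H] [InnerProductSpace ℂ H] [CompleteSpace H]
    [TopologicalSpace.SeparableSpace H]
    (RI : ResolutionOfIdentity H)
    (hcont : ∀ x y : H, Continuous fun θ => ⟪RI.P θ x, y⟫_ℂ)
    (n : ℕ) (hn : 1 ≤ n)
    {E : Type} [NormedAddCommGroup E] [InnerProductSpace ℂ E] [CompleteSpace E]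
    (TP : HilbertTensorPower ℂ H n E)
    (f g : E) (hf : TP.IsSymmetric f) (hg : TP.IsSymmetric g) :
    Continuous fun θ : Fin n → ℝ => ⟪TP.map (fun i => RI.P (θ i)) f, g⟫_ℂ :=
  statement9_general RI hcont n TP f g
end
end

section
/- Let R be a unitary operator on the Cameron–Martin space H (complexified if necessary) admitting an eigenvector z ∈ H, z ≠ 0, with eigenvalue c of modulus 1, and let T be the associated rotation of the Wiener space. Then δz∘T = c·δz μ-almost surely, the function f = |δz| satisfies f∘T = f μ-almost surely, and f is not μ-a.s. constant; consequently T is not ergodic. -/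
open MeasureTheory ProbabilityTheory Filter Topology
open scoped RealInnerProductSpace symmDiff

noncomputable section

/-- A *rotation* of an (abstract) Wiener space, in the sense of Üstünel–Zakai:
`δ : H → Ω → ℝ` is the Wiener integral on the Cameron–Martin space `H` (an isonormal
Gaussian process:  `δh` is centered Gaussian of variance `|h|²_H`, a.e.-linear in `h`,
and the `δh` generate the σ-algebra of `Ω` up to `μ`-null sets), `R` is a unitary
operator on `H`, and `T` is the associated measure-preserving transformation of `Ω`,
characterized by `δh ∘ T = δ(Rh)` a.s. for all `h ∈ H`. -/
structure GaussRotation (Ω : Type) [MeasurableSpace Ω] (μ : Measure Ω)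
    (H : Type) [NormedAddCommGroup H] [InnerProductSpace ℝ H] where
  δ : H → Ω → ℝ
  meas : ∀ h, Measurable (δ h)
  law : ∀ h : H, Measure.map (δ h) μ = gaussianReal 0 (‖h‖₊ ^ 2)
  add : ∀ g h : H, δ (g + h) =ᵐ[μ] δ g + δ h
  smul : ∀ (c : ℝ) (h : H), δ (c • h) =ᵐ[μ] c • δ h
  generating : ∀ A : Set Ω, MeasurableSet A →
    ∃ B : Set Ω, MeasurableSet[⨆ h : H, MeasurableSpace.comap (δ h) (borel ℝ)] B ∧
      μ (A ∆ B) = 0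
  R : H ≃ₗᵢ[ℝ] H
  T : Ω → Ω
  measT : Measurable T
  preserve : Measure.map T μ = μ
  rot : ∀ h : H, (fun ω => δ h (T ω)) =ᵐ[μ] δ (R h)

/-- A measure-preserving transformation is (strongly) mixing if
`E[(f∘Tⁿ)·g] → E[f]·E[g]` for all `f, g ∈ L²(μ)`. -/
def IsMixing {α : Type} [MeasurableSpace α] (f : α → α) (μ : Measure α) : Prop :=
  ∀ g₁ g₂ : α → ℝ, MemLp g₁ 2 μ → MemLp g₂ 2 μ →
    Tendsto (fun n : ℕ => ∫ ω, g₁ (f^[n] ω) * g₂ ω ∂μ) atTop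
      (𝓝 ((∫ ω, g₁ ω ∂μ) * ∫ ω, g₂ ω ∂μ))

open scoped InnerProductSpace

/-- A complexification of a real inner product space `H`: a complex inner product space
`Hc` together with an isometric real-linear embedding `j : H → Hc` and real/imaginary
part projections, so that every `x ∈ Hc` writes uniquely as `x = j(Re x) + i·j(Im x)`. -/
structure Complexification (H : Type) [NormedAddCommGroup H] [InnerProductSpace ℝ H]
    (Hc : Type) [NormedAddCommGroup Hc] [InnerProductSpace ℂ Hc] where
  j : H →ₗ[ℝ] Hc
  re : Hc →ₗ[ℝ] H
  im : Hc →ₗ[ℝ] H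
  inner_j : ∀ g h : H, ⟪j g, j h⟫_ℂ = (⟪g, h⟫_ℝ : ℂ)
  decomp : ∀ x : Hc, x = j (re x) + Complex.I • j (im x)
  re_j : ∀ h : H, re (j h) = h
  im_j : ∀ h : H, im (j h) = 0
  re_smulI : ∀ x : Hc, re (Complex.I • x) = - im x
  im_smulI : ∀ x : Hc, im (Complex.I • x) = re x

/-- The complexified Wiener integral `δ(h₁ + i h₂) = δh₁ + i δh₂`. -/
def complexδ {Ω : Type} [MeasurableSpace Ω] {μ : Measure Ω}
    {H : Type} [NormedAddCommGroup H] [InnerProductSpace ℝ H]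
    {Hc : Type} [NormedAddCommGroup Hc] [InnerProductSpace ℂ Hc]
    (GR : GaussRotation Ω μ H) (C : Complexification H Hc) (x : Hc) (ω : Ω) : ℂ :=
  (GR.δ (C.re x) ω : ℂ) + Complex.I * (GR.δ (C.im x) ω : ℂ)

/-!
Write `z = j h₁ + i j h₂`. Since `Rc` extends `R`, the complexified Wiener integral
`δz = δh₁ + i δh₂` satisfies `δz ∘ T = δ(Rc z) = δ(c z) = c δz`, and `|c| = 1` makes `|δz|`
invariant under `T`. One of `h₁, h₂` is nonzero, so `|δz|` dominates the absolute value of a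
nondegenerate Gaussian variable, which is a.s. bounded by no constant. An ergodic `T` would
force the invariant function `|δz|` to be a.s. constant.
-/

open scoped NNReal

lemma not_ae_abs_le_of_map_eq_gaussianReal {Ω : Type*} [MeasurableSpace Ω] {μ : Measure Ω}
    {X : Ω → ℝ} (hX : AEMeasurable X μ) {m : ℝ} {v : ℝ≥0} (hv : v ≠ 0)
    (hlaw : μ.map X = gaussianReal m v) (a : ℝ) : ¬ ∀ᵐ ω ∂μ, |X ω| ≤ a := by
  intro hbdd
  have hmeas : MeasurableSet {x : ℝ | |x| ≤ a} := measurableSet_le measurable_abs measurable_const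
  have hgauss : ∀ᵐ x ∂gaussianReal m v, |x| ≤ a := by
    rwa [← hlaw, ae_map_iff hX hmeas]
  have hleb : ∀ᵐ x ∂(volume : Measure ℝ), |x| ≤ a :=
    gaussianReal_absolutelyContinuous' m hv |>.ae_le hgauss
  have hnull : volume (Set.Ioi |a|) = 0 := by
    refine measure_mono_null (fun x hx => ?_) (ae_iff.mp hleb)
    exact not_le.mpr ((le_abs_self a).trans_lt (hx.out.trans_le (le_abs_self x)))
  simp at hnull

namespace GaussRotation

variable {Ω : Type} [MeasurableSpace Ω] {μ : Measure Ω}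
  {H : Type} [NormedAddCommGroup H] [InnerProductSpace ℝ H] (GR : GaussRotation Ω μ H)

lemma δ_smul_add_smul (a b : ℝ) (g h : H) :
    GR.δ (a • g + b • h) =ᵐ[μ] fun ω => a * GR.δ g ω + b * GR.δ h ω := by
  filter_upwards [GR.add (a • g) (b • h), GR.smul a g, GR.smul b h] with ω hadd hg hh
  simp_all

lemma not_ae_abs_δ_le {h : H} (hh : h ≠ 0) (a : ℝ) : ¬ ∀ᵐ ω ∂μ, |GR.δ h ω| ≤ a :=
  not_ae_abs_le_of_map_eq_gaussianReal (GR.meas h).aemeasurable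
    (pow_ne_zero 2 (nnnorm_ne_zero_iff.mpr hh)) (GR.law h) a

end GaussRotation

namespace Complexification

variable {H : Type} [NormedAddCommGroup H] [InnerProductSpace ℝ H]
  {Hc : Type} [NormedAddCommGroup Hc] [InnerProductSpace ℂ Hc] (C : Complexification H Hc)

lemma eq_zero_of_re_eq_zero_of_im_eq_zero {x : Hc} (hre : C.re x = 0) (him : C.im x = 0) :
    x = 0 := by
  rw [C.decomp x, hre, him, map_zero, smul_zero, add_zero]

lemma re_smul (c : ℂ) (x : Hc) : C.re (c • x) = c.re • C.re x - c.im • C.im x := by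
  conv_lhs => rw [← Complex.re_add_im c, add_smul, mul_smul, Complex.coe_smul, Complex.coe_smul]
  rw [map_add, map_smul, map_smul, C.re_smulI, smul_neg, sub_eq_add_neg]

lemma im_smul (c : ℂ) (x : Hc) : C.im (c • x) = c.re • C.im x + c.im • C.re x := by
  conv_lhs => rw [← Complex.re_add_im c, add_smul, mul_smul, Complex.coe_smul, Complex.coe_smul]
  rw [map_add, map_smul, map_smul, C.im_smulI]

variable {F : Type*} [FunLike F Hc Hc] [LinearMapClass F ℂ Hc Hc] {Rc : F} {R : H → H}

lemma map_eq_of_map_j (hRc : ∀ h, Rc (C.j h) = C.j (R h)) (x : Hc) :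
    Rc x = C.j (R (C.re x)) + Complex.I • C.j (R (C.im x)) := by
  conv_lhs => rw [C.decomp x]
  rw [map_add, map_smul, hRc, hRc]

lemma re_map_of_map_j (hRc : ∀ h, Rc (C.j h) = C.j (R h)) (x : Hc) :
    C.re (Rc x) = R (C.re x) := by
  rw [C.map_eq_of_map_j hRc, map_add, C.re_j, C.re_smulI, C.im_j, neg_zero, add_zero]

lemma im_map_of_map_j (hRc : ∀ h, Rc (C.j h) = C.j (R h)) (x : Hc) :
    C.im (Rc x) = R (C.im x) := by
  rw [C.map_eq_of_map_j hRc, map_add, C.im_j, C.im_smulI, C.re_j, zero_add]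

end Complexification

section complexδ

variable {Ω : Type} [MeasurableSpace Ω] {μ : Measure Ω}
  {H : Type} [NormedAddCommGroup H] [InnerProductSpace ℝ H]
  {Hc : Type} [NormedAddCommGroup Hc] [InnerProductSpace ℂ Hc]
  (GR : GaussRotation Ω μ H) (C : Complexification H Hc)

@[simp]
lemma re_complexδ (x : Hc) (ω : Ω) : (complexδ GR C x ω).re = GR.δ (C.re x) ω := by
  simp [complexδ]

@[simp]
lemma im_complexδ (x : Hc) (ω : Ω) : (complexδ GR C x ω).im = GR.δ (C.im x) ω := by
  simp [complexδ]

lemma measurable_complexδ (x : Hc) : Measurable (complexδ GR C x) := by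
  have hre := GR.meas (C.re x)
  have him := GR.meas (C.im x)
  unfold complexδ
  fun_prop

lemma complexδ_smul (c : ℂ) (x : Hc) :
    complexδ GR C (c • x) =ᵐ[μ] fun ω => c * complexδ GR C x ω := by
  have hre_smul : C.re (c • x) = c.re • C.re x + (-c.im) • C.im x := by
    rw [C.re_smul, neg_smul, sub_eq_add_neg]
  filter_upwards [hre_smul ▸ GR.δ_smul_add_smul c.re (-c.im) (C.re x) (C.im x),
    C.im_smul c x ▸ GR.δ_smul_add_smul c.re c.im (C.im x) (C.re x)] with ω hre hin
  apply Complex.ext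
  · simp [hre]
    ring
  · simp [hin]

lemma complexδ_comp_T {F : Type*} [FunLike F Hc Hc] [LinearMapClass F ℂ Hc Hc] {Rc : F}
    (hRc : ∀ h, Rc (C.j h) = C.j (GR.R h)) (x : Hc) :
    (fun ω => complexδ GR C x (GR.T ω)) =ᵐ[μ] complexδ GR C (Rc x) := by
  filter_upwards [GR.rot (C.re x), GR.rot (C.im x)] with ω hre him
  simp only [complexδ, C.re_map_of_map_j hRc, C.im_map_of_map_j hRc, hre, him]

lemma not_ae_eq_const_norm_complexδ {x : Hc} (hx : x ≠ 0) (a : ℝ) :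
    ¬ (fun ω => ‖complexδ GR C x ω‖) =ᵐ[μ] fun _ => a := by
  intro hconst
  by_cases hre : C.re x = 0
  · have him : C.im x ≠ 0 := fun him => hx (C.eq_zero_of_re_eq_zero_of_im_eq_zero hre him)
    refine GR.not_ae_abs_δ_le him a ?_
    filter_upwards [hconst] with ω hω
    simpa [hω] using Complex.abs_im_le_norm (complexδ GR C x ω)
  · refine GR.not_ae_abs_δ_le hre a ?_
    filter_upwards [hconst] with ω hω
    simpa [hω] using Complex.abs_re_le_norm (complexδ GR C x ω)

end complexδ

theorem statement16_general
    {Ω : Type} [MeasurableSpace Ω] (μ : Measure Ω)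
    {H : Type} [NormedAddCommGroup H] [InnerProductSpace ℝ H]
    {Hc : Type} [NormedAddCommGroup Hc] [InnerProductSpace ℂ Hc]
    (GR : GaussRotation Ω μ H) (C : Complexification H Hc)
    (Rc : Hc ≃ₗᵢ[ℂ] Hc) (hRc : ∀ h : H, Rc (C.j h) = C.j (GR.R h))
    (z : Hc) (hz : z ≠ 0) (c : ℂ) (hc : ‖c‖ = 1) (heig : Rc z = c • z) :
    ((fun ω => complexδ GR C z (GR.T ω)) =ᵐ[μ] fun ω => c * complexδ GR C z ω)
    ∧ ((fun ω => ‖complexδ GR C z (GR.T ω)‖)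
        =ᵐ[μ] fun ω => ‖complexδ GR C z ω‖)
    ∧ ¬ (∃ a : ℝ, (fun ω => ‖complexδ GR C z ω‖) =ᵐ[μ] fun _ => a)
    ∧ ¬ Ergodic GR.T μ := by
  have hT : (fun ω => complexδ GR C z (GR.T ω)) =ᵐ[μ] fun ω => c * complexδ GR C z ω :=
    (complexδ_comp_T GR C hRc z).trans (heig ▸ complexδ_smul GR C c z)
  have hinv : (fun ω => ‖complexδ GR C z (GR.T ω)‖) =ᵐ[μ] fun ω => ‖complexδ GR C z ω‖ := by
    filter_upwards [hT] with ω hω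
    rw [hω, norm_mul, hc, one_mul]
  have hnonconst : ¬ ∃ a : ℝ, (fun ω => ‖complexδ GR C z ω‖) =ᵐ[μ] fun _ => a :=
    fun ⟨a, ha⟩ => not_ae_eq_const_norm_complexδ GR C hz a ha
  refine ⟨hT, hinv, hnonconst, fun hergodic => hnonconst ?_⟩
  exact hergodic.ae_eq_const_of_ae_eq_comp_ae
    (measurable_complexδ GR C z).norm.aestronglyMeasurable hinv

/-- Let `R` be a unitary operator on the Cameron–Martin space `H`
(complexified if necessary) admitting an eigenvector `z ≠ 0` with eigenvalue `c` of
modulus `1`, and let `T` be the associated rotation.  Then `δz∘T = c·δz` a.s., the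
function `f = |δz|` satisfies `f∘T = f` a.s. and is not a.s. constant; consequently `T`
is not ergodic. -/
theorem statement16
    {Ω : Type} [MeasurableSpace Ω] (μ : Measure Ω) [IsProbabilityMeasure μ]
    {H : Type} [NormedAddCommGroup H] [InnerProductSpace ℝ H] [CompleteSpace H]
    {Hc : Type} [NormedAddCommGroup Hc] [InnerProductSpace ℂ Hc] [CompleteSpace Hc]
    (GR : GaussRotation Ω μ H) (C : Complexification H Hc)
    (Rc : Hc ≃ₗᵢ[ℂ] Hc) (hRc : ∀ h : H, Rc (C.j h) = C.j (GR.R h))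
    (z : Hc) (hz : z ≠ 0) (c : ℂ) (hc : ‖c‖ = 1) (heig : Rc z = c • z) :
    ((fun ω => complexδ GR C z (GR.T ω)) =ᵐ[μ] fun ω => c * complexδ GR C z ω)
    ∧ ((fun ω => ‖complexδ GR C z (GR.T ω)‖)
        =ᵐ[μ] fun ω => ‖complexδ GR C z ω‖)
    ∧ ¬ (∃ a : ℝ, (fun ω => ‖complexδ GR C z ω‖) =ᵐ[μ] fun _ => a)
    ∧ ¬ Ergodic GR.T μ :=
  statement16_general μ GR C Rc hRc z hz c hc heig
end
end
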